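/- Let A be a 1QFAC over a finite alphabet Σ that recognizes a language L ⊆ Σ* with cut-point λ isolated by ε. Then for all x, y ∈ Σ*: if s_x = s_y and ‖|ψ_x⟩ − |ψ_y⟩‖ < ε, then x ≡_L y. -/

import Mathlib

noncomputable section

/-- The `n`-dimensional complex Hilbert space `ℂⁿ`. -/
abbrev QState (n : ℕ) := EuclideanSpace ℂ (Fin n)

/-- Apply a matrix to a vector of `ℂⁿ`. -/
def mApply {n : ℕ} (M : Matrix (Fin n) (Fin n) ℂ) (v : QState n) : QState n :=
  Matrix.toEuclideanLin M v

/-- Myhill–Nerode equivalence: `x ≡_L y` iff `∀ z, xz ∈ L ↔ yz ∈ L`. -/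
def mnEquiv {α : Type} (L : Set (List α)) (x y : List α) : Prop :=
  ∀ z : List α, x ++ z ∈ L ↔ y ++ z ∈ L

/-- Myhill–Nerode equivalence as a setoid. -/
def mnSetoid {α : Type} (L : Set (List α)) : Setoid (List α) where
  r := mnEquiv L
  iseqv := ⟨fun _ _ => Iff.rfl, fun h z => (h z).symm, fun h1 h2 z => (h1 z).trans (h2 z)⟩

/-- A 1QFAC: classical states `S` with initial state and transitions, an `n`-dimensional
quantum part with a unit initial vector, a unitary for each (classical state, letter),
and an orthogonal projection (accepting measurement) for each classical state. -/
structure QFAC (Alph : Type) (S : Type) (n : ℕ) where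
  s0 : S
  tr : S → Alph → S
  ψ0 : QState n
  ψ0_unit : ‖ψ0‖ = 1
  U : S → Alph → Matrix (Fin n) (Fin n) ℂ
  U_unitary : ∀ s σ, U s σ ∈ Matrix.unitaryGroup (Fin n) ℂ
  P : S → Matrix (Fin n) (Fin n) ℂ
  P_proj : ∀ s, (P s).conjTranspose = P s ∧ P s * P s = P s

namespace QFAC
variable {Alph S : Type} {n : ℕ}

/-- `s_x`: the classical state reached after reading `x`. -/
def sState (A : QFAC Alph S n) (x : List Alph) : S := x.foldl A.tr A.s0

/-- `|ψ_x⟩`: the final quantum state after reading `x`. -/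
def qState (A : QFAC Alph S n) (x : List Alph) : QState n :=
  (x.foldl (fun p σ => (A.tr p.1 σ, mApply (A.U p.1 σ) p.2)) (A.s0, A.ψ0)).2

/-- Acceptance probability `‖P_{s_x,acc}|ψ_x⟩‖²`. -/
def probAcc (A : QFAC Alph S n) (x : List Alph) : ℝ :=
  ‖mApply (A.P (A.sState x)) (A.qState x)‖ ^ 2

/-- Recognition with cut-point `lam` isolated by `ε`. -/
def Recognizes (A : QFAC Alph S n) (L : Set (List Alph)) (lam ε : ℝ) : Prop :=
  (∀ x ∈ L, lam + ε ≤ A.probAcc x) ∧ (∀ x ∉ L, A.probAcc x ≤ lam - ε)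

end QFAC

/-!
Reading the same suffix `z` from the same classical state applies the same unitaries to `|ψ_x⟩`
and `|ψ_y⟩`, so `‖|ψ_{xz}⟩ − |ψ_{yz}⟩‖ = ‖|ψ_x⟩ − |ψ_y⟩‖ < ε`, and `s_{xz} = s_{yz}`. The
accepting projection is a contraction and the states are unit vectors, so
`|‖P u‖² − ‖P v‖²| ≤ 2‖u − v‖`: the acceptance probabilities of `xz` and `yz` differ by less than
`2ε`, the width of the isolation gap, hence `xz` and `yz` lie on the same side of the cut-point.
-/

open Matrix

lemma abs_norm_sq_sub_norm_sq_le {E F : Type*} [SeminormedAddCommGroup E]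
    [SeminormedAddCommGroup F] {f : E →+ F} (hf : ∀ w, ‖f w‖ ≤ ‖w‖) {u v : E}
    (hu : ‖u‖ ≤ 1) (hv : ‖v‖ ≤ 1) :
    |‖f u‖ ^ 2 - ‖f v‖ ^ 2| ≤ 2 * ‖u - v‖ := by
  have hfu : ‖f u‖ ≤ 1 := (hf u).trans hu
  have hfv : ‖f v‖ ≤ 1 := (hf v).trans hv
  calc |‖f u‖ ^ 2 - ‖f v‖ ^ 2| = |‖f u‖ - ‖f v‖| * (‖f u‖ + ‖f v‖) := by
        rw [sq_sub_sq, abs_mul, abs_of_nonneg (by positivity), mul_comm]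
    _ ≤ ‖u - v‖ * 2 := by
        gcongr
        · calc |‖f u‖ - ‖f v‖| ≤ ‖f u - f v‖ := abs_norm_sub_norm_le _ _
            _ = ‖f (u - v)‖ := by rw [map_sub]
            _ ≤ ‖u - v‖ := hf _
        · linarith
    _ = 2 * ‖u - v‖ := mul_comm _ _

lemma norm_mApply_of_mem_unitaryGroup {n : ℕ} {M : Matrix (Fin n) (Fin n) ℂ}
    (hM : M ∈ unitaryGroup (Fin n) ℂ) (v : QState n) : ‖mApply M v‖ = ‖v‖ :=
  ContinuousLinearMap.norm_map_of_mem_unitary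
    (Unitary.map_mem (toEuclideanCLM (n := Fin n) (𝕜 := ℂ)).toStarAlgHom hM) v

lemma norm_mApply_le_of_isStarProjection {n : ℕ} {M : Matrix (Fin n) (Fin n) ℂ}
    (hM : IsStarProjection M) (v : QState n) : ‖mApply M v‖ ≤ ‖v‖ :=
  ((toEuclideanCLM (𝕜 := ℂ) M).le_of_opNorm_le (hM.map toEuclideanCLM).norm_le v).trans_eq
    (one_mul _)

namespace QFAC
variable {Alph S : Type} {n : ℕ}

lemma Recognizes.mem_iff_of_abs_probAcc_sub_lt {L : Set (List Alph)} {lam ε : ℝ}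
    {A : QFAC Alph S n} (hrec : A.Recognizes L lam ε) {x y : List Alph}
    (h : |A.probAcc x - A.probAcc y| < 2 * ε) : x ∈ L ↔ y ∈ L := by
  obtain ⟨hacc, hrej⟩ := hrec
  rw [abs_lt] at h
  constructor
  · intro hx
    by_contra hy
    linarith [hacc x hx, hrej y hy]
  · intro hy
    by_contra hx
    linarith [hacc y hy, hrej x hx]

variable (A : QFAC Alph S n)

lemma isStarProjection_P (s : S) : IsStarProjection (A.P s) :=
  ⟨(A.P_proj s).2, (A.P_proj s).1⟩

def stepIsometry (s : S) (σ : Alph) : QState n →ₗᵢ[ℂ] QState n where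
  toLinearMap := toEuclideanLin (A.U s σ)
  norm_map' := norm_mApply_of_mem_unitaryGroup (A.U_unitary s σ)

def evolve : S → List Alph → QState n →ₗᵢ[ℂ] QState n
  | _, [] => LinearIsometry.id
  | s, σ :: z => (evolve (A.tr s σ) z).comp (A.stepIsometry s σ)

lemma foldl_eq_evolve (z : List Alph) (s : S) (v : QState n) :
    z.foldl (fun p σ => (A.tr p.1 σ, mApply (A.U p.1 σ) p.2)) (s, v) =
      (z.foldl A.tr s, A.evolve s z v) := by
  induction z generalizing s v with
  | nil => rfl
  | cons σ z ih => exact ih (A.tr s σ) _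

lemma qState_eq_evolve (x : List Alph) : A.qState x = A.evolve A.s0 x A.ψ0 :=
  congrArg Prod.snd (A.foldl_eq_evolve x A.s0 A.ψ0)

lemma norm_qState (x : List Alph) : ‖A.qState x‖ = 1 := by
  rw [qState_eq_evolve, LinearIsometry.norm_map, A.ψ0_unit]

lemma sState_append (x z : List Alph) : A.sState (x ++ z) = z.foldl A.tr (A.sState x) :=
  List.foldl_append

lemma qState_append (x z : List Alph) :
    A.qState (x ++ z) = A.evolve (A.sState x) z (A.qState x) := by
  rw [qState, List.foldl_append, A.foldl_eq_evolve x, ← qState_eq_evolve, A.foldl_eq_evolve]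
  rfl

lemma norm_qState_append_sub {x y : List Alph} (hs : A.sState x = A.sState y) (z : List Alph) :
    ‖A.qState (x ++ z) - A.qState (y ++ z)‖ = ‖A.qState x - A.qState y‖ := by
  rw [qState_append, qState_append, hs, ← map_sub, LinearIsometry.norm_map]

lemma abs_probAcc_sub_le {x y : List Alph} (hs : A.sState x = A.sState y) :
    |A.probAcc x - A.probAcc y| ≤ 2 * ‖A.qState x - A.qState y‖ := by
  rw [probAcc, probAcc, hs]
  exact abs_norm_sq_sub_norm_sq_le (f := (toEuclideanLin (A.P _)).toAddMonoidHom)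
    (norm_mApply_le_of_isStarProjection (A.isStarProjection_P _))
    (A.norm_qState x).le (A.norm_qState y).le

end QFAC

theorem stmt_6_general {Alph S : Type} {n : ℕ}
    (A : QFAC Alph S n) (L : Set (List Alph)) (lam ε : ℝ)
    (hrec : A.Recognizes L lam ε)
    (x y : List Alph) (hs : A.sState x = A.sState y)
    (hq : ‖A.qState x - A.qState y‖ < ε) :
    mnEquiv L x y := by
  intro z
  have hsz : A.sState (x ++ z) = A.sState (y ++ z) := by
    rw [A.sState_append, A.sState_append, hs]
  refine hrec.mem_iff_of_abs_probAcc_sub_lt ?_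
  calc |A.probAcc (x ++ z) - A.probAcc (y ++ z)|
      ≤ 2 * ‖A.qState (x ++ z) - A.qState (y ++ z)‖ := A.abs_probAcc_sub_le hsz
    _ = 2 * ‖A.qState x - A.qState y‖ := by rw [A.norm_qState_append_sub hs]
    _ < 2 * ε := by linarith

/-- If a 1QFAC recognizes `L` with cut-point `lam` isolated by `ε`, and
`s_x = s_y` with `‖|ψ_x⟩ − |ψ_y⟩‖ < ε`, then `x ≡_L y`. -/
theorem stmt_6 {Alph S : Type} [Fintype Alph] {n : ℕ}
    (A : QFAC Alph S n) (L : Set (List Alph)) (lam ε : ℝ)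
    (hlam : 0 < lam ∧ lam < 1) (hε : 0 < ε)
    (hrec : A.Recognizes L lam ε)
    (x y : List Alph) (hs : A.sState x = A.sState y)
    (hq : ‖A.qState x - A.qState y‖ < ε) :
    mnEquiv L x y :=
  stmt_6_general A L lam ε hrec x y hs hq

end
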